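/- arXiv:2303.02192 — 2 statements merged into one kernel-verified Lean document; each statement's English description precedes it below -/
import Mathlib

section
/- Let F be a field of characteristic zero, D a finite-dimensional division algebra over F, and V a finite-dimensional right D-vector space. If x ∈ End_D(V) is such that V decomposes as a direct sum of x-irreducible D-subspaces, then x is semisimple as an F-linear endomorphism of V; equivalently, its minimal polynomial over F is squarefree. -/
open Polynomial

section Aux

variable {F D V : Type*} [Field F] [DivisionRing D] [Algebra F D]
  [AddCommGroup V] [Module D V] [Module F V] [IsScalarTower F D V]

private lemma aux_smul_comm (c : F) (d : D) (v : V) : c • d • v = d • c • v := by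
  rw [← algebraMap_smul D c (d • v), ← algebraMap_smul D c v, smul_smul, smul_smul,
    Algebra.commutes]

private lemma aux_pow_smul (x : V →ₗ[D] V) (n : ℕ) (d : D) (v : V) :
    ((LinearMap.restrictScalars F x) ^ n) (d • v)
      = d • ((LinearMap.restrictScalars F x) ^ n) v := by
  induction n generalizing v with
  | zero => simp
  | succ n ih =>
    have h1 : (LinearMap.restrictScalars F x) (d • v)
        = d • (LinearMap.restrictScalars F x) v := x.map_smul d v
    rw [pow_succ, Module.End.mul_apply, Module.End.mul_apply, h1, ih]

private lemma aux_aeval_smul (x : V →ₗ[D] V) (p : F[X]) (d : D) (v : V) :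
    (Polynomial.aeval (LinearMap.restrictScalars F x) p) (d • v)
      = d • (Polynomial.aeval (LinearMap.restrictScalars F x) p) v := by
  induction p using Polynomial.induction_on' with
  | add p q hp hq => simp only [map_add, LinearMap.add_apply, hp, hq, smul_add]
  | monomial n c =>
    simp only [Polynomial.aeval_monomial, Module.End.mul_apply,
      Module.algebraMap_end_apply]
    rw [aux_pow_smul (F := F) x n d v, aux_smul_comm]

/-- Kernel of `aeval f p` as a `D`-submodule. -/
private def kerD (x : V →ₗ[D] V) (p : F[X]) : Submodule D V where
  carrier := {v | (Polynomial.aeval (LinearMap.restrictScalars F x) p) v = 0}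
  add_mem' := by
    intro a b ha hb
    simp only [Set.mem_setOf_eq] at *
    rw [map_add, ha, hb, add_zero]
  zero_mem' := by simp
  smul_mem' := by
    intro d v hv
    simp only [Set.mem_setOf_eq] at *
    rw [aux_aeval_smul, hv, smul_zero]

private lemma mem_kerD (x : V →ₗ[D] V) (p : F[X]) (v : V) :
    v ∈ kerD (F := F) x p ↔ (Polynomial.aeval (LinearMap.restrictScalars F x) p) v = 0 :=
  Iff.rfl

end Aux

private lemma aux_aeval_restrict {F V : Type*} [Field F] [AddCommGroup V] [Module F V]
    (f : V →ₗ[F] V) (U : Submodule F V) (h : ∀ v ∈ U, f v ∈ U) (p : F[X]) (v : U) :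
    ((Polynomial.aeval (f.restrict h) p) v : V) = Polynomial.aeval f p v := by
  induction p using Polynomial.induction_on' with
  | add p q hp hq => simp only [map_add, LinearMap.add_apply, Submodule.coe_add, hp, hq]
  | monomial n c =>
    simp only [Polynomial.aeval_monomial, Module.End.mul_apply,
      Module.algebraMap_end_apply, SetLike.val_smul]
    rw [Module.End.pow_restrict n h, LinearMap.restrict_coe_apply]

/-- If V (a finite-dimensional right D-vector space, D a finite-dimensional
division algebra over a characteristic-zero field F) decomposes into a direct sum of
x-irreducible D-subspaces for x ∈ End_D(V), then x is semisimple as an F-linear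
endomorphism, i.e. its minimal polynomial over F is squarefree. -/
theorem stmt2 (F D V : Type*) [Field F] [CharZero F] [DivisionRing D] [Algebra F D]
    [FiniteDimensional F D] [AddCommGroup V] [Module D V] [Module F V]
    [IsScalarTower F D V] [FiniteDimensional F V]
    (x : V →ₗ[D] V)
    (hdecomp : ∃ (ι : Type) (_ : DecidableEq ι) (P : ι → Submodule D V),
      DirectSum.IsInternal P ∧ ∀ i, P i ≠ ⊥ ∧ (∀ v ∈ P i, x v ∈ P i) ∧
        ∀ q : Submodule D V, q ≤ P i → (∀ v ∈ q, x v ∈ q) → q = ⊥ ∨ q = P i) :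
    Squarefree (minpoly F (LinearMap.restrictScalars F x)) := by
  classical
  obtain ⟨ι, _, P, hint, hP⟩ := hdecomp
  set f : V →ₗ[F] V := LinearMap.restrictScalars F x with hfdef
  have hfint : IsIntegral F f :=
    (Algebra.IsIntegral.of_finite F (Module.End F V)).isIntegral f
  have hm0 : minpoly F f ≠ 0 := minpoly.ne_zero hfint
  -- the key per-piece fact
  have key : ∀ i, ∃ mi : F[X], Irreducible mi ∧ mi ∣ minpoly F f ∧
      ∀ v ∈ P i, ∀ c : F[X], mi ∣ c → Polynomial.aeval f c v = 0 := by
    intro i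
    obtain ⟨hne, hinv, hmin⟩ := hP i
    set U : Submodule F V := (P i).restrictScalars F with hU
    have hinv' : ∀ v ∈ U, f v ∈ U := fun v hv => hinv v hv
    set g : U →ₗ[F] U := f.restrict hinv' with hg
    have hgint : IsIntegral F g :=
      (Algebra.IsIntegral.of_finite F (Module.End F U)).isIntegral g
    have hgm0 : minpoly F g ≠ 0 := minpoly.ne_zero hgint
    obtain ⟨v0, hv0mem, hv00⟩ := Submodule.exists_mem_ne_zero_of_ne_bot hne
    have hUnt : Nontrivial U :=
      ⟨⟨v0, hv0mem⟩, 0, fun h => hv00 (by simpa using congrArg Subtype.val h)⟩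
    -- the minpoly of the restriction divides the minpoly of f
    have hdvdm : minpoly F g ∣ minpoly F f := by
      apply minpoly.dvd
      apply LinearMap.ext
      intro u
      apply Subtype.ext
      rw [aux_aeval_restrict f U hinv' (minpoly F f) u]
      rw [minpoly.aeval F f]
      rfl
    -- the "kills" property
    have hkill : ∀ v ∈ P i, ∀ c : F[X], minpoly F g ∣ c → Polynomial.aeval f c v = 0 := by
      intro v hv c hdvd
      obtain ⟨t, rfl⟩ := hdvd
      have : Polynomial.aeval g (minpoly F g * t) = 0 := by
        rw [map_mul, minpoly.aeval, zero_mul]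
      have h2 := congrArg Subtype.val (LinearMap.congr_fun this ⟨v, hv⟩)
      rw [aux_aeval_restrict f U hinv' _ _] at h2
      simpa using h2
    refine ⟨minpoly F g, ?_, hdvdm, hkill⟩
    -- irreducibility
    have hnu : ¬ IsUnit (minpoly F g) := by
      intro hu
      have := minpoly.natDegree_pos hgint
      have := Polynomial.natDegree_eq_zero_of_isUnit hu
      omega
    obtain ⟨p, hpirr, hpdvd⟩ := WfDvdMonoid.exists_irreducible_factor hnu hgm0
    obtain ⟨c, hc⟩ := hpdvd
    -- consider the kernel of aeval f p intersected with P i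
    set q : Submodule D V := kerD (F := F) x p ⊓ P i with hq
    have hqle : q ≤ P i := inf_le_right
    have hcomm : ∀ v, Polynomial.aeval f p (f v) = f (Polynomial.aeval f p v) := by
      intro v
      have h1 : Polynomial.aeval f p * Polynomial.aeval f (X : F[X])
          = Polynomial.aeval f (X : F[X]) * Polynomial.aeval f p := by
        rw [← map_mul, ← map_mul, mul_comm]
      have h2 := congrFun (congrArg DFunLike.coe h1) v
      simpa [Polynomial.aeval_X] using h2
    have hqinv : ∀ v ∈ q, x v ∈ q := by
      intro v hv
      rw [hq, Submodule.mem_inf] at hv ⊢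
      refine ⟨?_, hinv v hv.2⟩
      have hv1 : Polynomial.aeval f p v = 0 := hv.1
      show Polynomial.aeval f p (f v) = 0
      rw [hcomm, hv1, map_zero]
    rcases hmin q hqle hqinv with hbot | htop
    · -- q = ⊥ : aeval g p is injective, derive a contradiction
      exfalso
      have hinj : Function.Injective (Polynomial.aeval g p) := by
        rw [← LinearMap.ker_eq_bot]
        rw [Submodule.eq_bot_iff]
        intro u hu
        rw [LinearMap.mem_ker] at hu
        have h2 := congrArg Subtype.val hu
        rw [aux_aeval_restrict f U hinv' p u] at h2
        have : (u : V) ∈ q := ⟨h2, u.2⟩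
        rw [hbot] at this
        exact Subtype.ext (by simpa using this)
      have hzero : Polynomial.aeval g c = 0 := by
        apply LinearMap.ext
        intro u
        rw [LinearMap.zero_apply]
        apply hinj
        rw [map_zero, ← Module.End.mul_apply, ← map_mul, ← hc, minpoly.aeval,
          LinearMap.zero_apply]
      have hcd : minpoly F g ∣ c := minpoly.dvd F g hzero
      have hc0 : c ≠ 0 := by
        intro h; rw [h, mul_zero] at hc; exact hgm0 hc
      have hle := Polynomial.natDegree_le_of_dvd hcd hc0
      have hmul : (minpoly F g).natDegree = p.natDegree + c.natDegree := by
        rw [hc, Polynomial.natDegree_mul hpirr.ne_zero hc0]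
      have hppos := hpirr.natDegree_pos
      omega
    · -- q = P i : aeval g p = 0, so minpoly g ∣ p, hence associated to p
      have hz : Polynomial.aeval g p = 0 := by
        apply LinearMap.ext
        intro u
        apply Subtype.ext
        rw [aux_aeval_restrict f U hinv' p u]
        have : (u : V) ∈ q := htop ▸ u.2
        exact this.1
      have : minpoly F g ∣ p := minpoly.dvd F g hz
      exact (associated_of_dvd_dvd (hc ▸ dvd_mul_right p c) this).irreducible hpirr
  -- final step
  rw [squarefree_iff_irreducible_sq_not_dvd_of_ne_zero hm0]
  intro p hp hdvd
  obtain ⟨c, hc⟩ := hdvd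
  have hann : Polynomial.aeval f (p * c) = 0 := by
    apply LinearMap.ext
    intro v
    have hv : v ∈ (⊤ : Submodule D V) := trivial
    rw [← hint.submodule_iSup_eq_top] at hv
    rw [LinearMap.zero_apply]
    refine Submodule.iSup_induction (motive := fun w => Polynomial.aeval f (p * c) w = 0)
      P hv (fun i w hw => ?_) (map_zero _)
      (fun a b ha hb => by
        have ha' : Polynomial.aeval f (p * c) a = 0 := ha
        have hb' : Polynomial.aeval f (p * c) b = 0 := hb
        show Polynomial.aeval f (p * c) (a + b) = 0
        rw [map_add, ha', hb', add_zero])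
    obtain ⟨mi, hirr, hdvdm, hkill⟩ := key i
    refine hkill w hw (p * c) ?_
    have h1 : mi ∣ p * (p * c) := by
      refine hdvdm.trans ?_
      rw [hc]; ring_nf; exact Dvd.intro 1 (by ring)
    rcases hirr.prime.dvd_mul.mp h1 with h | h
    · exact h.mul_right c
    · exact h
  have hdvd2 : minpoly F f ∣ p * c := minpoly.dvd F f hann
  rw [hc] at hdvd2
  have hc0 : c ≠ 0 := by
    intro h; rw [h, mul_zero] at hc; exact hm0 hc
  have hp0 : p ≠ 0 := hp.ne_zero
  have hle := Polynomial.natDegree_le_of_dvd hdvd2 (mul_ne_zero hp0 hc0)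
  rw [Polynomial.natDegree_mul (mul_ne_zero hp0 hp0) hc0,
    Polynomial.natDegree_mul hp0 hc0, Polynomial.natDegree_mul hp0 hp0] at hle
  have := hp.natDegree_pos
  omega
end

section
/- Let W be a finite-dimensional symplectic vector space over a field F. Every g ∈ Sp(W) is a product of two elements g₁, g₂ ∈ Sp(W) with det(g₁ − 1) ≠ 0 and det(g₂ − 1) ≠ 0. -/
open LinearMap Module Submodule Polynomial

namespace Stmt10Aux

set_option linter.unusedSectionVars false
set_option maxHeartbeats 1000000

variable {F W : Type*} [Field F] [AddCommGroup W] [Module F W] [FiniteDimensional F W]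

/-- A totally isotropic subspace. -/
def Isotrop (B : LinearMap.BilinForm F W) (L : Submodule F W) : Prop :=
  ∀ x ∈ L, ∀ y ∈ L, B x y = 0

variable {B : LinearMap.BilinForm F W}

lemma le_orthogonal_of_isotrop {L : Submodule F W} (h : Isotrop B L) :
    L ≤ B.orthogonal L := fun x hx n hn => h n hn x hx

lemma isotrop_sup_span {L : Submodule F W} (halt : B.IsAlt) (hL : Isotrop B L)
    {v : W} (hv : v ∈ B.orthogonal L) : Isotrop B (L ⊔ F ∙ v) := by
  intro x hx y hy
  rw [Submodule.mem_sup] at hx hy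
  obtain ⟨a, ha, x', hx', rfl⟩ := hx
  obtain ⟨b, hb, y', hy', rfl⟩ := hy
  obtain ⟨c, rfl⟩ := Submodule.mem_span_singleton.mp hx'
  obtain ⟨d, rfl⟩ := Submodule.mem_span_singleton.mp hy'
  have h1 : B a v = 0 := hv a ha
  have h2 : B v b = 0 := halt.isRefl b v (hv b hb)
  simp [map_add, map_smul, smul_eq_mul, h1, h2, hL a ha b hb, halt v]

lemma exists_lagrangian_aux (halt : B.IsAlt) (hnd : B.Nondegenerate) :
    ∀ (k : ℕ) (L : Submodule F W), Isotrop B L → finrank F W ≤ finrank F L + k →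
      ∃ M : Submodule F W, Isotrop B M ∧ B.orthogonal M = M := by
  intro k
  induction k with
  | zero =>
    intro L hL hle
    refine ⟨L, hL, le_antisymm ?_ (le_orthogonal_of_isotrop hL)⟩
    have h0 : finrank F (B.orthogonal L) = 0 := by
      rw [LinearMap.BilinForm.finrank_orthogonal hnd]
      omega
    rw [Submodule.finrank_eq_zero.mp h0]
    exact bot_le
  | succ k ih =>
    intro L hL hle
    by_cases horth : B.orthogonal L ≤ L
    · exact ⟨L, hL, le_antisymm horth (le_orthogonal_of_isotrop hL)⟩
    · obtain ⟨v, hvO, hvL⟩ := SetLike.not_le_iff_exists.mp horth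
      have hlt : L < L ⊔ F ∙ v := by
        refine lt_of_le_of_ne le_sup_left fun h => hvL ?_
        rw [h]
        exact Submodule.mem_sup_right (Submodule.mem_span_singleton_self v)
      have := Submodule.finrank_lt_finrank_of_lt hlt
      exact ih (L ⊔ F ∙ v) (isotrop_sup_span halt hL hvO) (by omega)

lemma exists_lagrangian (halt : B.IsAlt) (hnd : B.Nondegenerate) :
    ∃ M : Submodule F W, Isotrop B M ∧ B.orthogonal M = M := by
  refine exists_lagrangian_aux halt hnd (finrank F W) ⊥ ?_ (by simp)
  intro x hx
  rw [Submodule.mem_bot] at hx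
  simp [hx]

lemma lagrangian_finrank (halt : B.IsAlt) (hnd : B.Nondegenerate)
    {M : Submodule F W} (hM : B.orthogonal M = M) :
    finrank F W = 2 * finrank F M := by
  have h1 := LinearMap.BilinForm.finrank_orthogonal hnd M
  rw [hM] at h1
  have h2 : finrank F M ≤ finrank F W := Submodule.finrank_le M
  omega


/-- key non-containment: orthogonal of small isotropic N is not inside N ⊔ M -/
lemma orth_not_le (halt : B.IsAlt) (hnd : B.Nondegenerate)
    {M N : Submodule F W} (hM : B.orthogonal M = M)
    (hNM : N ⊓ M = ⊥) (hdim : finrank F N < finrank F M) :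
    ¬ (B.orthogonal N ≤ N ⊔ M) := by
  intro hle
  have hW := lagrangian_finrank halt hnd hM
  have hO : finrank F (B.orthogonal N) = finrank F W - finrank F N :=
    LinearMap.BilinForm.finrank_orthogonal hnd N
  -- the intersection (orth N) ⊓ M is nonzero
  have hsum := Submodule.finrank_sup_add_finrank_inf_eq (B.orthogonal N) M
  have hle2 : finrank F ((B.orthogonal N) ⊔ M : Submodule F W) ≤ finrank F W :=
    Submodule.finrank_le _
  have hpos : 0 < finrank F ((B.orthogonal N) ⊓ M : Submodule F W) := by omega
  have hne : ((B.orthogonal N) ⊓ M : Submodule F W) ≠ ⊥ := by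
    intro h
    rw [h, finrank_bot] at hpos
    omega
  obtain ⟨x, hx, hx0⟩ := Submodule.exists_mem_ne_zero_of_ne_bot hne
  obtain ⟨hxO, hxM⟩ := Submodule.mem_inf.mp hx
  -- x is orthogonal to N ⊔ M
  have hxperp : x ∈ B.orthogonal (N ⊔ M) := by
    intro y hy
    rw [Submodule.mem_sup] at hy
    obtain ⟨a, ha, b, hb, rfl⟩ := hy
    have h1 : B a x = 0 := hxO a ha
    have h2 : B b x = 0 := by
      rw [← hM] at hxM
      exact hxM b hb
    simp [LinearMap.BilinForm.IsOrtho, map_add, h1, h2]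
  -- hence x ∈ orth (orth N) = N
  have hxN : x ∈ N := by
    have h3 : B.orthogonal (N ⊔ M) ≤ B.orthogonal (B.orthogonal N) :=
      LinearMap.BilinForm.orthogonal_le hle
    have h4 := h3 hxperp
    rwa [LinearMap.BilinForm.orthogonal_orthogonal hnd halt.isRefl] at h4
  have : x ∈ N ⊓ M := Submodule.mem_inf.mpr ⟨hxN, hxM⟩
  rw [hNM, Submodule.mem_bot] at this
  exact hx0 this

lemma exists_transversal (halt : B.IsAlt) (hnd : B.Nondegenerate)
    {M₁ M₂ : Submodule F W} (h1 : B.orthogonal M₁ = M₁) (h2 : B.orthogonal M₂ = M₂) :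
    ∀ k, k ≤ finrank F M₁ →
      ∃ N : Submodule F W, Isotrop B N ∧ finrank F N = k ∧ N ⊓ M₁ = ⊥ ∧ N ⊓ M₂ = ⊥ := by
  have hrank : finrank F M₂ = finrank F M₁ := by
    have := lagrangian_finrank halt hnd h1
    have := lagrangian_finrank halt hnd h2
    omega
  intro k
  induction k with
  | zero =>
    refine fun _ => ⟨⊥, ?_, finrank_bot F W, bot_inf_eq _, bot_inf_eq _⟩
    intro x hx
    rw [Submodule.mem_bot] at hx
    simp [hx]
  | succ k ih =>
    intro hk
    obtain ⟨N, hN, hNrank, hN1, hN2⟩ := ih (by omega)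
    have key1 : ¬ (B.orthogonal N ≤ N ⊔ M₁) :=
      orth_not_le halt hnd h1 hN1 (by omega)
    have key2 : ¬ (B.orthogonal N ≤ N ⊔ M₂) :=
      orth_not_le halt hnd h2 hN2 (by omega)
    obtain ⟨a, haO, haP⟩ := SetLike.not_le_iff_exists.mp key1
    obtain ⟨b, hbO, hbP⟩ := SetLike.not_le_iff_exists.mp key2
    -- find v ∈ orth N avoiding both N ⊔ M₁ and N ⊔ M₂
    obtain ⟨v, hvO, hv1, hv2⟩ :
        ∃ v, v ∈ B.orthogonal N ∧ v ∉ N ⊔ M₁ ∧ v ∉ N ⊔ M₂ := by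
      by_cases ha2 : a ∈ N ⊔ M₂
      · by_cases hb1 : b ∈ N ⊔ M₁
        · refine ⟨a + b, Submodule.add_mem _ haO hbO, fun h => haP ?_, fun h => hbP ?_⟩
          · have := Submodule.sub_mem _ h hb1
            simpa using this
          · have := Submodule.sub_mem _ h ha2
            simpa using this
        · exact ⟨b, hbO, hb1, hbP⟩
      · exact ⟨a, haO, haP, ha2⟩
    have hvN : v ∉ N := fun h => hv1 (Submodule.mem_sup_left h)
    have hv0 : v ≠ 0 := fun h => hvN (h ▸ N.zero_mem)
    refine ⟨N ⊔ F ∙ v, isotrop_sup_span halt hN hvO, ?_, ?_, ?_⟩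
    · have hinf : N ⊓ (F ∙ v) = ⊥ := by
        rw [eq_bot_iff]
        intro x hx
        obtain ⟨hxN, hxv⟩ := Submodule.mem_inf.mp hx
        obtain ⟨c, rfl⟩ := Submodule.mem_span_singleton.mp hxv
        rcases eq_or_ne c 0 with rfl | hc
        · simp
        · refine absurd (?_ : v ∈ N) hvN
          have := N.smul_mem c⁻¹ hxN
          simpa [smul_smul, inv_mul_cancel₀ hc] using this
      have := Submodule.finrank_sup_add_finrank_inf_eq N (F ∙ v)
      rw [hinf, finrank_bot, finrank_span_singleton hv0, hNrank] at this
      omega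
    · rw [eq_bot_iff]
      intro x hx
      obtain ⟨hxN', hxM⟩ := Submodule.mem_inf.mp hx
      rw [Submodule.mem_sup] at hxN'
      obtain ⟨c', hc', x', hx', rfl⟩ := hxN'
      obtain ⟨c, rfl⟩ := Submodule.mem_span_singleton.mp hx'
      rcases eq_or_ne c 0 with rfl | hc
      · simp only [zero_smul, add_zero] at hxM ⊢
        have : c' ∈ N ⊓ M₁ := Submodule.mem_inf.mpr ⟨hc', hxM⟩
        rwa [hN1] at this
      · exfalso
        apply hv1
        have hsum : c' + c • v ∈ N ⊔ M₁ := Submodule.mem_sup_right hxM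
        have : c • v ∈ N ⊔ M₁ := by
          have := Submodule.sub_mem _ hsum (Submodule.mem_sup_left hc')
          simpa using this
        have := Submodule.smul_mem _ c⁻¹ this
        simpa [smul_smul, inv_mul_cancel₀ hc] using this
    · rw [eq_bot_iff]
      intro x hx
      obtain ⟨hxN', hxM⟩ := Submodule.mem_inf.mp hx
      rw [Submodule.mem_sup] at hxN'
      obtain ⟨c', hc', x', hx', rfl⟩ := hxN'
      obtain ⟨c, rfl⟩ := Submodule.mem_span_singleton.mp hx'
      rcases eq_or_ne c 0 with rfl | hc
      · simp only [zero_smul, add_zero] at hxM ⊢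
        have : c' ∈ N ⊓ M₂ := Submodule.mem_inf.mpr ⟨hc', hxM⟩
        rwa [hN2] at this
      · exfalso
        apply hv2
        have hsum : c' + c • v ∈ N ⊔ M₂ := Submodule.mem_sup_right hxM
        have : c • v ∈ N ⊔ M₂ := by
          have := Submodule.sub_mem _ hsum (Submodule.mem_sup_left hc')
          simpa using this
        have := Submodule.smul_mem _ c⁻¹ this
        simpa [smul_smul, inv_mul_cancel₀ hc] using this


lemma exists_pair (halt : B.IsAlt) (hnd : B.Nondegenerate)
    (g : W →ₗ[F] W) (hg : Function.Bijective g)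
    (hgB : ∀ u v, B (g u) (g v) = B u v) :
    ∃ L L' : Submodule F W, Isotrop B L ∧ Isotrop B L' ∧ IsCompl L L' ∧
      (L.map g) ⊓ L' = ⊥ := by
  obtain ⟨L, hL, hLo⟩ := exists_lagrangian halt hnd
  have hW := lagrangian_finrank halt hnd hLo
  set M₂ := L.map g with hM₂def
  have hM₂iso : Isotrop B M₂ := by
    rintro x ⟨u, hu, rfl⟩ y ⟨u', hu', rfl⟩
    rw [hgB]
    exact hL u hu u' hu'
  have hM₂rank : finrank F M₂ = finrank F L :=
    (LinearEquiv.finrank_eq (Submodule.equivMapOfInjective g hg.injective L)).symm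
  have hM₂o : B.orthogonal M₂ = M₂ := by
    refine (Submodule.eq_of_le_of_finrank_le (le_orthogonal_of_isotrop hM₂iso) ?_).symm
    rw [LinearMap.BilinForm.finrank_orthogonal hnd]
    omega
  obtain ⟨N, hN, hNrank, hN1, hN2⟩ :=
    exists_transversal halt hnd hLo hM₂o (finrank F L) le_rfl
  refine ⟨L, N, hL, hN, ?_, by rw [inf_comm]; exact hN2⟩
  constructor
  · rw [disjoint_iff, inf_comm]
    exact hN1
  · rw [codisjoint_iff]
    apply Submodule.eq_top_of_finrank_eq
    have := Submodule.finrank_sup_add_finrank_inf_eq L N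
    rw [inf_comm] at hN1
    rw [hN1, finrank_bot, hNrank] at this
    omega


lemma det_ne_zero_of_comp_eq_id {f h : W →ₗ[F] W} (h1 : f ∘ₗ h = LinearMap.id) :
    LinearMap.det f ≠ 0 := by
  have h2 := congrArg LinearMap.det h1
  rw [LinearMap.det_comp, LinearMap.det_id] at h2
  intro h0
  rw [h0, zero_mul] at h2
  exact zero_ne_one h2

lemma det_ne_zero_of_bijective {f : W →ₗ[F] W} (hf : Function.Bijective f) :
    LinearMap.det f ≠ 0 := by
  have h := LinearEquiv.isUnit_det' (LinearEquiv.ofBijective f hf)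
  exact h.ne_zero


end Stmt10Aux


set_option maxHeartbeats 1000000 in
/-- Every element of the symplectic group of a finite-dimensional
symplectic space over an infinite field is a product of two symplectic transformations
g₁, g₂ with det(gᵢ - 1) ≠ 0. -/
theorem stmt10 (F W : Type*) [Field F] [Infinite F] [AddCommGroup W] [Module F W]
    [FiniteDimensional F W]
    (B : LinearMap.BilinForm F W) (halt : ∀ u, B u u = 0)
    (hnd : ∀ u, (∀ v, B u v = 0) → u = 0)
    (g : W →ₗ[F] W) (hg : Function.Bijective g)
    (hgB : ∀ u v, B (g u) (g v) = B u v) :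
    ∃ g₁ g₂ : W →ₗ[F] W,
      Function.Bijective g₁ ∧ Function.Bijective g₂ ∧
      (∀ u v, B (g₁ u) (g₁ v) = B u v) ∧ (∀ u v, B (g₂ u) (g₂ v) = B u v) ∧
      g = g₁ ∘ₗ g₂ ∧
      LinearMap.det (g₁ - LinearMap.id) ≠ 0 ∧
      LinearMap.det (g₂ - LinearMap.id) ≠ 0 := by
  classical
  open Stmt10Aux in
  obtain ⟨L, L', hL, hL', hc, htr⟩ := Stmt10Aux.exists_pair halt ((LinearMap.IsRefl.nondegenerate_iff_separatingLeft (B := B) (LinearMap.BilinForm.IsAlt.isRefl halt)).mpr hnd) g hg hgB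
  -- the two projections
  set p : W →ₗ[F] W := L.subtype ∘ₗ L.projectionOnto L' hc with hpdef
  set q : W →ₗ[F] W := L'.subtype ∘ₗ L'.projectionOnto L hc.symm with hqdef
  have hp_mem : ∀ x, p x ∈ L := fun x => SetLike.coe_mem _
  have hq_mem : ∀ x, q x ∈ L' := fun x => SetLike.coe_mem _
  have hpq : ∀ x, p x + q x = x := fun x =>
    Submodule.projection_add_projection_eq_self hc x
  have hpL : ∀ x, x ∈ L → p x = x := by
    intro x hx
    show (↑(L.projectionOnto L' hc x) : W) = x
    rw [show x = ((⟨x, hx⟩ : L) : W) from rfl, Submodule.linearProjOfIsCompl_apply_left hc]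
  have hpR : ∀ x, x ∈ L' → p x = 0 := by
    intro x hx
    show (↑(L.projectionOnto L' hc x) : W) = 0
    rw [Submodule.linearProjOfIsCompl_apply_right' hc hx, Submodule.coe_zero]
  have hqL : ∀ x, x ∈ L' → q x = x := by
    intro x hx
    show (↑(L'.projectionOnto L hc.symm x) : W) = x
    rw [show x = ((⟨x, hx⟩ : L') : W) from rfl,
      Submodule.linearProjOfIsCompl_apply_left hc.symm]
  have hqR : ∀ x, x ∈ L → q x = 0 := by
    intro x hx
    show (↑(L'.projectionOnto L hc.symm x) : W) = 0
    rw [Submodule.linearProjOfIsCompl_apply_right' hc.symm hx, Submodule.coe_zero]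
  have pp : ∀ x, p (p x) = p x := fun x => hpL _ (hp_mem x)
  have pq : ∀ x, p (q x) = 0 := fun x => hpR _ (hq_mem x)
  have qp : ∀ x, q (p x) = 0 := fun x => hqR _ (hp_mem x)
  have qq : ∀ x, q (q x) = q x := fun x => hqL _ (hq_mem x)
  have hpq' : p + q = LinearMap.id := by
    ext x
    exact hpq x
  -- composition rule for the torus family
  have hcomp : ∀ c d c' d' : F,
      (c • p + d • q) ∘ₗ (c' • p + d' • q) = (c * c') • p + (d * d') • q := by
    intro c d c' d'
    ext x
    simp only [LinearMap.comp_apply, LinearMap.add_apply, LinearMap.smul_apply,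
      map_add, map_smul, pp, pq, qp, qq, smul_zero, add_zero, zero_add, smul_smul]
    ring_nf
  -- the torus family
  set S : F → (W →ₗ[F] W) := fun t => t • p + t⁻¹ • q with hSdef
  have hS_comp : ∀ t : F, t ≠ 0 → S t ∘ₗ S t⁻¹ = LinearMap.id ∧
      S t⁻¹ ∘ₗ S t = LinearMap.id := by
    intro t ht
    have h1 : S t⁻¹ = t⁻¹ • p + t • q := by rw [hSdef]; simp [inv_inv]
    constructor
    · rw [hSdef] at *
      simp only [h1]
      rw [hcomp, mul_inv_cancel₀ ht, inv_mul_cancel₀ ht, one_smul, one_smul, hpq']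
    · rw [hSdef] at *
      simp only [h1]
      rw [hcomp, inv_mul_cancel₀ ht, mul_inv_cancel₀ ht, one_smul, one_smul, hpq']
  have hS_bij : ∀ t : F, t ≠ 0 → Function.Bijective (S t) := by
    intro t ht
    refine Function.bijective_iff_has_inverse.mpr ⟨S t⁻¹, fun x => ?_, fun x => ?_⟩
    · simpa using DFunLike.congr_fun (hS_comp t ht).2 x
    · simpa using DFunLike.congr_fun (hS_comp t ht).1 x
  have hS_symp : ∀ t : F, t ≠ 0 → ∀ u v, B (S t u) (S t v) = B u v := by
    intro t ht u v
    have e1 : B (p u) (p v) = 0 := hL _ (hp_mem u) _ (hp_mem v)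
    have e2 : B (q u) (q v) = 0 := hL' _ (hq_mem u) _ (hq_mem v)
    have lhs : B (S t u) (S t v) = B (p u) (q v) + B (q u) (p v) := by
      rw [hSdef]
      simp only [LinearMap.add_apply, LinearMap.smul_apply, map_add, map_smul,
        LinearMap.smul_apply, smul_eq_mul, e1, e2, mul_zero]
      field_simp
      ring
    have rhs : B u v = B (p u) (q v) + B (q u) (p v) := by
      calc B u v = B (p u + q u) (p v + q v) := by rw [hpq u, hpq v]
        _ = B (p u) (q v) + B (q u) (p v) := by
            simp [map_add, e1, e2]
            ring
    rw [lhs, rhs]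
  -- the maps alpha and beta
  set α : W →ₗ[F] W := g ∘ₗ p - q with hαdef
  set β : W →ₗ[F] W := g ∘ₗ q - p with hβdef
  have hα_inj : Function.Injective α := by
    rw [← LinearMap.ker_eq_bot, eq_bot_iff]
    intro x hx
    rw [LinearMap.mem_ker] at hx
    have h1 : g (p x) = q x := by
      have h0 : g (p x) - q x = 0 := hx
      rwa [sub_eq_zero] at h0
    have h2 : g (p x) ∈ (L.map g) ⊓ L' := by
      refine Submodule.mem_inf.mpr ⟨Submodule.mem_map_of_mem (hp_mem x), ?_⟩
      rw [h1]
      exact hq_mem x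
    rw [htr, Submodule.mem_bot] at h2
    have h3 : q x = 0 := by rw [← h1, h2]
    have h4 : p x = 0 := by
      apply hg.injective
      rw [h2, map_zero]
    rw [Submodule.mem_bot, ← hpq x, h3, h4, add_zero]
  have hα_det : LinearMap.det α ≠ 0 :=
    det_ne_zero_of_bijective
      ⟨hα_inj, (LinearMap.injective_iff_surjective).mp hα_inj⟩
  -- the polynomial
  set b : Basis (Fin (finrank F W)) F W := Module.finBasis F W with hbdef
  set A : Matrix (Fin (finrank F W)) (Fin (finrank F W)) F := LinearMap.toMatrix b b α
    with hAdef
  set Bm : Matrix (Fin (finrank F W)) (Fin (finrank F W)) F := LinearMap.toMatrix b b β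
    with hBmdef
  have hAdet : A.det ≠ 0 := by
    rw [hAdef, LinearMap.det_toMatrix]
    exact hα_det
  set Mp : Matrix (Fin (finrank F W)) (Fin (finrank F W)) F[X] :=
    (X : F[X]) • A.map (C : F →+* F[X]) + Bm.map (C : F →+* F[X]) with hMpdef
  set P : F[X] := Mp.det with hPdef
  have hfac : Mp = A.map (C : F →+* F[X]) *
      ((X : F[X]) • (1 : Matrix _ _ F[X]) + (A⁻¹ * Bm).map (C : F →+* F[X])) := by
    have hAC : A.map (C : F →+* F[X]) * (A⁻¹ * Bm).map (C : F →+* F[X])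
        = Bm.map (C : F →+* F[X]) := by
      rw [← Matrix.map_mul, ← Matrix.mul_assoc,
        Matrix.mul_nonsing_inv A (isUnit_iff_ne_zero.mpr hAdet), Matrix.one_mul]
    rw [Matrix.mul_add, Matrix.mul_smul, Matrix.mul_one, hAC, hMpdef]
  have hP : P ≠ 0 := by
    rw [hPdef, hfac, Matrix.det_mul]
    apply mul_ne_zero
    · intro h0
      apply hAdet
      have hcd : (C : F →+* F[X]) A.det = 0 := by
        rw [RingHom.map_det]
        exact h0
      simpa using hcd
    · have hch : (X : F[X]) • (1 : Matrix (Fin (finrank F W)) (Fin (finrank F W)) F[X]) +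
          (A⁻¹ * Bm).map (C : F →+* F[X]) = Matrix.charmatrix (-(A⁻¹ * Bm)) := by
        ext i j
        rw [Matrix.add_apply, Matrix.smul_apply, Matrix.map_apply, Matrix.charmatrix_apply,
          Matrix.neg_apply, map_neg, sub_neg_eq_add]
        congr 1
        by_cases h : i = j <;>
          simp [h, Matrix.one_apply, Matrix.diagonal_apply, smul_eq_mul]
      rw [hch]
      exact (Matrix.charpoly_monic (-(A⁻¹ * Bm))).ne_zero
  have heval : ∀ t : F, P.eval t = LinearMap.det (t • α + β) := by
    intro t
    have h1 : Mp.map (eval t) = t • A + Bm := by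
      ext i j
      rw [Matrix.map_apply, hMpdef, Matrix.add_apply, Matrix.smul_apply, Matrix.map_apply,
        Matrix.map_apply, Matrix.add_apply, Matrix.smul_apply]
      simp only [eval_add, eval_mul, eval_X, eval_C, smul_eq_mul, mul_comm]
    have h2 : (t • A + Bm : Matrix _ _ F) = LinearMap.toMatrix b b (t • α + β) := by
      rw [map_add, map_smul, hAdef, hBmdef]
    calc P.eval t = (evalRingHom t) Mp.det := rfl
      _ = (Mp.map (evalRingHom t)).det := RingHom.map_det _ _
      _ = (t • A + Bm).det := by
          rw [show Mp.map ⇑(evalRingHom t) = t • A + Bm from h1]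
      _ = LinearMap.det (t • α + β) := by rw [h2, LinearMap.det_toMatrix]
  -- choose a good parameter t
  have hfin : ({x | P.IsRoot x} ∪ {0, 1} : Set F).Finite :=
    (Polynomial.finite_setOf_isRoot hP).union ((Set.finite_singleton 1).insert 0)
  obtain ⟨t, ht⟩ := hfin.infinite_compl.nonempty
  simp only [Set.mem_compl_iff, Set.mem_union, Set.mem_setOf_eq, Set.mem_insert_iff,
    Set.mem_singleton_iff, not_or] at ht
  obtain ⟨htP, ht0, ht1⟩ := ht
  have htP' : P.eval t ≠ 0 := htP
  -- the key determinant identity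
  have hkey : (g ∘ₗ S t - LinearMap.id) ∘ₗ (p + t • q) = t • α + β := by
    ext x
    have hstp : ∀ y, S t (p y) = t • p y := by
      intro y
      rw [hSdef]
      simp only [LinearMap.add_apply, LinearMap.smul_apply, pp, qp, smul_zero, add_zero]
    have hstq : ∀ y, S t (q y) = t⁻¹ • q y := by
      intro y
      rw [hSdef]
      simp only [LinearMap.add_apply, LinearMap.smul_apply, pq, qq, smul_zero, zero_add]
    simp only [LinearMap.comp_apply, LinearMap.sub_apply, LinearMap.add_apply,
      LinearMap.smul_apply, LinearMap.id_coe, id_eq, hαdef, hβdef, hstp, hstq,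
      map_add, map_smul, smul_smul, mul_inv_cancel₀ ht0, one_smul]
    match_scalars <;> field_simp
  have hdetg1 : LinearMap.det (g ∘ₗ S t - LinearMap.id) ≠ 0 := by
    intro h0
    apply htP'
    rw [heval t, ← hkey, LinearMap.det_comp, h0, zero_mul]
  have hSdet : ∀ r : F, r ≠ 0 → r ≠ 1 → LinearMap.det (S r - LinearMap.id) ≠ 0 := by
    intro r hr0 hr1
    have hr1' : r⁻¹ ≠ 1 := fun h => hr1 (by rw [← inv_inv r, h, inv_one])
    have hd1 : r - 1 ≠ 0 := sub_ne_zero.mpr hr1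
    have hd2 : r⁻¹ - 1 ≠ 0 := sub_ne_zero.mpr hr1'
    have hSr : S r - LinearMap.id = (r - 1) • p + (r⁻¹ - 1) • q := by
      rw [hSdef, ← hpq']
      ext x
      simp only [LinearMap.sub_apply, LinearMap.add_apply, LinearMap.smul_apply, sub_smul,
        one_smul]
      module
    rw [hSr]
    apply det_ne_zero_of_comp_eq_id (h := (r - 1)⁻¹ • p + (r⁻¹ - 1)⁻¹ • q)
    rw [hcomp, mul_inv_cancel₀ hd1, mul_inv_cancel₀ hd2, one_smul, one_smul, hpq']
  refine ⟨g ∘ₗ S t, S t⁻¹, ?_, ?_, ?_, ?_, ?_, hdetg1, ?_⟩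
  · rw [LinearMap.coe_comp]
    exact hg.comp (hS_bij t ht0)
  · exact hS_bij t⁻¹ (inv_ne_zero ht0)
  · intro u v
    rw [LinearMap.comp_apply, LinearMap.comp_apply, hgB]
    exact hS_symp t ht0 u v
  · exact hS_symp t⁻¹ (inv_ne_zero ht0)
  · rw [LinearMap.comp_assoc, (hS_comp t ht0).1, LinearMap.comp_id]
  · exact hSdet t⁻¹ (inv_ne_zero ht0) (fun h => ht1 (by rw [← inv_inv t, h, inv_one]))
end
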